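/- arXiv:1606.01493 — 3 statements merged into one kernel-verified Lean document; each statement's English description precedes it below -/
import Mathlib

section
/- Let d ≥ 3 and let α₁ ≥ α₂ ≥ ... ≥ α_d be a non-increasing sequence of positive integers with sum n. Then α₂ + 2α₃ + 3α₄ + ... + (d-1)α_d ≤ (1/2)(d-1)(n - (α₁ - α_d)), i.e., 2(α₂ + 2α₃ + ... + (d-1)α_d) ≤ (d-1)(n - α₁ + α_d). -/
/-!
Split off the first and the last term. The first has weight `0` on the left, and the last one,
`(d - 1) α_d`, matches its counterpart on the right, because `n - (α₁ - α_d)` counts `α_d` twice.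
For the middle block `β_j = α_{j+2}` (`j < m = d - 2`) it remains to show
`∑ (2j + 1) β_j ≤ m ∑ β_j`: this is Chebyshev's sum inequality for the increasing weights
`2j + 1` against the non-increasing `β`, as those weights sum to `m²`.
-/

open Finset

theorem Finset.sum_range_two_mul_add_one (m : ℕ) : ∑ i ∈ range m, (2 * i + 1) = m ^ 2 := by
  induction m with
  | zero => rfl
  | succ m ih => rw [sum_range_succ, ih]; ring

theorem Antitone.sum_two_mul_add_one_mul_le {R : Type*} [Semiring R] [LinearOrder R]
    [IsStrictOrderedRing R] [ExistsAddOfLE R] {m : ℕ} {f : Fin m → R} (hf : Antitone f) :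
    ∑ i : Fin m, (2 * ((i : ℕ) : R) + 1) * f i ≤ m * ∑ i, f i := by
  rcases m.eq_zero_or_pos with rfl | hm
  · simp
  have hodd : ∑ i : Fin m, (2 * ((i : ℕ) : R) + 1) = (m : R) * m := by
    rw [← sq, ← Nat.cast_pow, ← sum_range_two_mul_add_one, Nat.cast_sum,
      ← Fin.sum_univ_eq_sum_range]
    push_cast; rfl
  have hcheb := (Monotone.antivary (f := fun i : Fin m => 2 * ((i : ℕ) : R) + 1)
    (fun i j hij => by dsimp only; gcongr; exact hij) hf).card_mul_sum_le_sum_mul_sum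
  rw [Fintype.card_fin, hodd, mul_assoc] at hcheb
  exact le_of_mul_le_mul_left hcheb (Nat.cast_pos.mpr hm)

theorem Fin.sum_univ_eq_first_add_sum_add_last {M : Type*} [AddCommMonoid M] {m : ℕ}
    (F : Fin (m + 2) → M) :
    ∑ i, F i = F 0 + ∑ j : Fin m, F j.castSucc.succ + F (Fin.last (m + 1)) := by
  simp only [Fin.sum_univ_succ F, Fin.sum_univ_castSucc, Fin.succ_last, add_assoc]

/-- Key arithmetic inequality behind Lemma 2.1: for a non-increasing sequence
`α₁ ≥ ... ≥ α_d` of positive integers with sum `n` and `d ≥ 3`,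
`2(α₂ + 2α₃ + ... + (d-1)α_d) ≤ (d-1)(n - α₁ + α_d)`. -/
theorem schur_abelian_exponent_bound (d n : ℕ) (hd : 3 ≤ d)
    (α : Fin d → ℕ) (hmono : Antitone α)
    (hsum : ∑ i, α i = n) :
    2 * ∑ i : Fin d, (i : ℕ) * α i ≤
      (d - 1) * (n - (α ⟨0, by omega⟩ - α ⟨d - 1, by omega⟩)) := by
  obtain ⟨m, rfl⟩ : ∃ m, d = m + 2 := ⟨d - 2, by omega⟩
  have hmiddle : ∑ j : Fin m, (2 * (j : ℕ) + 1) * α j.castSucc.succ ≤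
      m * ∑ j : Fin m, α j.castSucc.succ :=
    Antitone.sum_two_mul_add_one_mul_le fun i j hij => hmono (by simpa using hij)
  have hsplit : 2 * ∑ j : Fin m, ((j : ℕ) + 1) * α j.castSucc.succ =
      ∑ j : Fin m, (2 * (j : ℕ) + 1) * α j.castSucc.succ + ∑ j : Fin m, α j.castSucc.succ := by
    rw [mul_sum, ← sum_add_distrib]
    exact sum_congr rfl fun j _ => by ring
  have hends : α (Fin.last (m + 1)) ≤ α 0 := hmono (Fin.zero_le _)
  rw [Fin.sum_univ_eq_first_add_sum_add_last] at hsum ⊢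
  change 2 * (_ + _ + _) ≤ (m + 1) * (n - (α 0 - α (Fin.last (m + 1))))
  rw [show n - (α 0 - α (Fin.last (m + 1))) =
    ∑ j : Fin m, α j.castSucc.succ + 2 * α (Fin.last (m + 1)) by omega]
  simp only [Fin.val_zero, Fin.val_last, Fin.val_succ, Fin.val_castSucc, zero_mul, zero_add]
  linarith
end

section
/- Let G be a finite abelian p-group of order p^n with G ≅ C_{p^{α₁}} × ... × C_{p^{α_d}}, α₁ ≥ ... ≥ α_d, minimally generated by d elements. Then |M(G)| ≤ p^{(1/2)(d-1)(n - (α₁ - α_d))}. -/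
/-!
For a 2-cocycle `f` of an abelian group `G` with trivial coefficients `M`, the alternation
`(a, b) ↦ f (a, b) - f (b, a)` is an alternating biadditive form on `G`. It vanishes only for
symmetric `f`, and a symmetric cocycle classifies an abelian extension of `G` by `M`, which splits
when `M` is divisible (hence an injective `ℤ`-module), as `ℂˣ` is. So `H²(G, ℂˣ)` embeds into the
alternating forms on `G`. For `G = ∏ᵢ ℤ/p^{αᵢ}` such a form is determined by its values on the
pairs of generators `eᵢ, eⱼ` with `i < j`, and each value is a `p^{αⱼ}`-th root of unity. So
`|M(G)| ≤ p^{∑ⱼ j αⱼ}`, and `2 ∑ⱼ j αⱼ ≤ (d - 1) (n - (α₁ - α_d))` for antitone `α`.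
-/
/-- The Schur multiplier of a (finite) group `G`, realised as the second cohomology
group `H²(G, ℂˣ)` with trivial action (for finite `G` this is `H₂(G, ℤ)`). -/
abbrev SchurMultiplier (G : Type) [Group G] : Type :=
  groupCohomology.H2 (Rep.trivial ℤ G (Additive ℂˣ))

section Divisible

variable (K : Type*) [Field K] [IsAlgClosed K]

noncomputable instance : DivisibleBy (Additive Kˣ) ℕ :=
  divisibleByOfSMulRightSurj _ _ fun {k} hk u => by
    obtain ⟨z, hz⟩ := IsAlgClosed.exists_pow_nat_eq (u.toMul : K) (Nat.pos_of_ne_zero hk)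
    have hz0 : z ≠ 0 := by rintro rfl; exact u.toMul.ne_zero (by simpa [hk] using hz.symm)
    exact ⟨.ofMul (Units.mk0 z hz0), by
      change k • _ = u
      rw [← ofMul_pow]
      exact congr_arg Additive.ofMul
        (Units.ext (by simpa using hz) : Units.mk0 z hz0 ^ k = u.toMul)⟩

noncomputable instance : DivisibleBy (Additive Kˣ) ℤ := AddGroup.divisibleByIntOfDivisibleByNat _

instance : Module.Injective ℤ (Additive Kˣ) := (Module.Baer.of_divisible _).injective

end Divisible

namespace groupCohomology

variable {G M : Type} [CommGroup G] [AddCommGroup M]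

theorem cocycles₂_trivial_map_mul_fst (f : cocycles₂ (Rep.trivial ℤ G M)) (a b c : G) :
    f (a * b, c) + f (a, b) = f (b, c) + f (a, b * c) := by
  simpa using (mem_cocycles₂_iff f.1).1 f.2 a b c

theorem cocycles₂_trivial_map_one_snd (f : cocycles₂ (Rep.trivial ℤ G M)) (a : G) :
    f (a, 1) = f (1, 1) := by
  simpa using cocycles₂_map_one_snd f a

/-- The central extension of `G` by `M` classified by the cocycle `f`; the `- f (1, 1)` makes
`(1, 0)` its zero, as `f` need not be normalized. -/
abbrev cocycleExtension (f : cocycles₂ (Rep.trivial ℤ G M)) (hf : ∀ a b, f (a, b) = f (b, a)) :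
    AddCommGroup (G × M) :=
  letI : Zero (G × M) := ⟨(1, 0)⟩
  letI : Add (G × M) := ⟨fun x y => (x.1 * y.1, x.2 + y.2 + f (x.1, y.1) - f (1, 1))⟩
  letI : Neg (G × M) := ⟨fun x => (x.1⁻¹, -x.2 - f (x.1⁻¹, x.1) + f (1, 1))⟩
  { AddGroup.ofLeftAxioms
      (fun x y z => Prod.ext (mul_assoc _ _ _) (by
        change x.2 + y.2 + f (x.1, y.1) - f (1, 1) + z.2 + f (x.1 * y.1, z.1) - f (1, 1) =
          x.2 + (y.2 + z.2 + f (y.1, z.1) - f (1, 1)) + f (x.1, y.1 * z.1) - f (1, 1)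
        rw [eq_sub_of_add_eq (cocycles₂_trivial_map_mul_fst f x.1 y.1 z.1)]; abel))
      (fun x => Prod.ext (one_mul _) (by
        change 0 + x.2 + f (1, x.1) - f (1, 1) = x.2
        rw [cocycles₂_map_one_fst]; abel))
      (fun x => Prod.ext (inv_mul_cancel _) (by
        change -x.2 - f (x.1⁻¹, x.1) + f (1, 1) + x.2 + f (x.1⁻¹, x.1) - f (1, 1) = 0
        abel)) with
    add_comm := fun x y => Prod.ext (mul_comm _ _) (by
      change x.2 + y.2 + f (x.1, y.1) - f (1, 1) = y.2 + x.2 + f (y.1, x.1) - f (1, 1)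
      rw [hf]; abel) }

/-- The extension classified by `f` splits because `M` is injective: for a retraction `φ` of
`m ↦ (1, m)`, the cochain `a ↦ φ (a, 0) + f (1, 1)` has coboundary `f`. -/
theorem mem_coboundaries₂_of_symm [Module.Injective ℤ M] (f : cocycles₂ (Rep.trivial ℤ G M))
    (hf : ∀ a b, f (a, b) = f (b, a)) : ⇑f ∈ coboundaries₂ (Rep.trivial ℤ G M) := by
  let := cocycleExtension f hf
  let ι : M →+ G × M := AddMonoidHom.mk' (fun m => (1, m)) fun m m' => Prod.ext (one_mul 1).symm
    (by change m + m' = m + m' + f (1, 1) - f (1, 1); abel)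
  have hι : Function.Injective ι := fun m m' h => congr_arg Prod.snd h
  obtain ⟨φ, hφ⟩ := Module.Injective.extension_property ℤ _ _ _ ι.toIntLinearMap hι LinearMap.id
  refine ⟨fun a => φ (a, 0) + f (1, 1), funext fun ⟨a, b⟩ => ?_⟩
  have hsum : ((a, 0) + (b, 0) : G × M) = (a * b, 0) + ι (f (a, b) - f (1, 1)) :=
    Prod.ext (mul_one _).symm (by
      change 0 + 0 + f (a, b) - f (1, 1) = 0 + (f (a, b) - f (1, 1)) + f (a * b, 1) - f (1, 1)
      rw [cocycles₂_trivial_map_one_snd f (a * b)]; abel)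
  have hφι : φ (ι (f (a, b) - f (1, 1))) = f (a, b) - f (1, 1) := LinearMap.congr_fun hφ _
  have := congr_arg φ hsum
  rw [map_add, map_add, hφι] at this
  simp only [d₁₂_hom_apply, Representation.trivial_apply]
  rw [← sub_eq_zero]
  convert sub_eq_zero.mpr this using 1
  abel

theorem cocycles₂_trivial_comm_mul_left (f : cocycles₂ (Rep.trivial ℤ G M)) (a b c : G) :
    f (a * b, c) - f (c, a * b) = (f (a, c) - f (c, a)) + (f (b, c) - f (c, b)) := by
  have e₁ := eq_sub_of_add_eq (cocycles₂_trivial_map_mul_fst f a b c)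
  have e₂ := eq_sub_of_add_eq' (cocycles₂_trivial_map_mul_fst f c a b).symm
  have e₃ := eq_sub_of_add_eq' (cocycles₂_trivial_map_mul_fst f a c b).symm
  rw [mul_comm c b] at e₃
  rw [e₁, e₂, e₃, mul_comm c a]
  abel

def cocycleAlt (f : cocycles₂ (Rep.trivial ℤ G M)) : Additive G →+ Additive G →+ M :=
  AddMonoidHom.mk'
    (fun a => AddMonoidHom.mk' (fun b => f (a.toMul, b.toMul) - f (b.toMul, a.toMul))
      fun b c => by
        have := cocycles₂_trivial_comm_mul_left f b.toMul c.toMul a.toMul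
        rw [toMul_add, ← neg_sub, this]; abel)
    fun a b => AddMonoidHom.ext fun c => cocycles₂_trivial_comm_mul_left f a.toMul b.toMul c.toMul

theorem cocycleAlt_apply (f : cocycles₂ (Rep.trivial ℤ G M)) (a b : Additive G) :
    cocycleAlt f a b = f (a.toMul, b.toMul) - f (b.toMul, a.toMul) := rfl

theorem cocycleAlt_self (f : cocycles₂ (Rep.trivial ℤ G M)) (a : Additive G) :
    cocycleAlt f a a = 0 := sub_self _

theorem H2π_eq_of_cocycleAlt_eq [Module.Injective ℤ M] {f f' : cocycles₂ (Rep.trivial ℤ G M)}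
    (h : cocycleAlt f = cocycleAlt f') : H2π _ f = H2π _ f' := by
  rw [H2π_eq_iff]
  refine mem_coboundaries₂_of_symm (f - f') fun a b => ?_
  have := congr($h (.ofMul a) (.ofMul b))
  simp only [cocycleAlt_apply, toMul_ofMul] at this
  change f (a, b) - f' (a, b) = f (b, a) - f' (b, a)
  rw [sub_eq_sub_iff_sub_eq_sub, this]

end groupCohomology

section PiZMod

variable {ι : Type*} [Fintype ι] [DecidableEq ι] {n : ι → ℕ} {M : Type*} [AddCommGroup M]

theorem AddMonoidHom.pi_zmod_ext {f g : (∀ i, ZMod (n i)) →+ M}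
    (h : ∀ i, f (Pi.single i 1) = g (Pi.single i 1)) : f = g :=
  AddMonoidHom.functions_ext _ _ _ fun i x => by
    obtain ⟨k, rfl⟩ := ZMod.intCast_surjective x
    rw [← zsmul_one, Pi.single_smul, map_zsmul, map_zsmul, h]

theorem AddMonoidHom.pi_zmod_ext₂ {β γ : (∀ i, ZMod (n i)) →+ (∀ i, ZMod (n i)) →+ M}
    (h : ∀ i j, β (Pi.single i 1) (Pi.single j 1) = γ (Pi.single i 1) (Pi.single j 1)) :
    β = γ :=
  pi_zmod_ext fun i => pi_zmod_ext (h i)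

theorem AddMonoidHom.pi_zmod_ext_of_alternating [LinearOrder ι]
    {β γ : (∀ i, ZMod (n i)) →+ (∀ i, ZMod (n i)) →+ M} (hβ : ∀ x, β x x = 0)
    (hγ : ∀ x, γ x x = 0)
    (h : ∀ i j, i < j → β (Pi.single i 1) (Pi.single j 1) = γ (Pi.single i 1) (Pi.single j 1)) :
    β = γ := by
  have antisymm : ∀ δ : (∀ i, ZMod (n i)) →+ (∀ i, ZMod (n i)) →+ M, (∀ x, δ x x = 0) →
      ∀ x y, δ x y = -δ y x := fun δ hδ x y => by
    have := hδ (x + y)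
    simp only [map_add, AddMonoidHom.add_apply, hδ, zero_add, add_zero] at this
    exact eq_neg_of_add_eq_zero_right this
  refine pi_zmod_ext₂ fun i j => ?_
  rcases lt_trichotomy i j with hij | rfl | hij
  · exact h i j hij
  · rw [hβ, hγ]
  · rw [antisymm β hβ, antisymm γ hγ, h j i hij]

end PiZMod

theorem Function.FactorsThrough.card_le_of_surjective {A B C : Type*} [Finite C] {π : A → B}
    {φ : A → C} (h : π.FactorsThrough φ) (hπ : π.Surjective) : Nat.card B ≤ Nat.card C :=
  Nat.card_le_card_of_injective (φ ∘ Function.surjInv hπ) fun b b' hb => by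
    simpa only [Function.surjInv_eq] using h hb

theorem Complex.card_additive_units_nsmul_eq_zero (k : ℕ) [NeZero k] :
    Nat.card {m : Additive ℂˣ // k • m = 0} = k :=
  (Nat.card_congr (Equiv.subtypeEquiv Additive.toMul fun m => by
    rw [_root_.mem_rootsOfUnity, ← toMul_nsmul, toMul_eq_one])).trans (Complex.card_rootsOfUnity k)

namespace Fin

theorem add_mul_last_le_sum_of_antitone {d : ℕ} {α : Fin (d + 1) → ℕ} (hα : Antitone α) :
    α 0 + d * α (last d) ≤ ∑ j, α j := by
  rw [sum_univ_succ]
  gcongr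
  simpa using Finset.card_nsmul_le_sum Finset.univ (fun j : Fin d => α j.succ) _
    fun j _ => hα (le_last j.succ)

theorem two_mul_sum_val_mul_add_le_of_antitone {d : ℕ} {α : Fin (d + 1) → ℕ}
    (hα : Antitone α) :
    2 * ∑ j : Fin (d + 1), (j : ℕ) * α j + d * α 0 ≤ d * ∑ j, α j + d * α (last d) := by
  induction d with
  | zero => simp
  | succ d ih =>
    have hβ : Antitone (α ∘ castSucc) := hα.comp_monotone strictMono_castSucc.monotone
    have h₁ := ih hβ
    have h₂ := add_mul_last_le_sum_of_antitone hβ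
    have h₃ : α (last (d + 1)) ≤ α (castSucc (last d)) := hα (le_last _)
    simp only [Function.comp_apply, castSucc_zero] at h₁ h₂
    rw [sum_univ_castSucc (fun j => (j : ℕ) * α j), sum_univ_castSucc α]
    simp only [val_castSucc, val_last]
    linarith

theorem two_mul_sum_val_mul_le_of_antitone {d : ℕ} (hd : 0 < d) {α : Fin d → ℕ}
    (hα : Antitone α) :
    2 * ∑ j : Fin d, (j : ℕ) * α j ≤
      (d - 1) * (∑ j, α j - (α ⟨0, hd⟩ - α ⟨d - 1, by omega⟩)) := by
  obtain ⟨d, rfl⟩ := Nat.exists_eq_add_one_of_ne_zero hd.ne'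
  have h₁ := two_mul_sum_val_mul_add_le_of_antitone hα
  have h₂ := add_mul_last_le_sum_of_antitone hα
  have h₃ : α (last d) ≤ α 0 := hα (zero_le _)
  change _ ≤ d * (_ - (α 0 - α (last d)))
  zify [h₃, show α 0 - α (last d) ≤ ∑ j, α j by omega] at *
  linarith

end Fin

namespace groupCohomology

theorem card_H2_trivial_le_prod_card_torsion {d : ℕ} {n : Fin d → ℕ} {G M : Type}
    [CommGroup G] [AddCommGroup M] [Module.Injective ℤ M] [∀ j, Finite {m : M // n j • m = 0}]
    (ε : Additive G ≃+ ∀ i, ZMod (n i)) :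
    Nat.card (H2 (Rep.trivial ℤ G M)) ≤
      ∏ j : Fin d, Nat.card {m : M // n j • m = 0} ^ (j : ℕ) := by
  let β (f : cocycles₂ (Rep.trivial ℤ G M)) : (∀ i, ZMod (n i)) →+ (∀ i, ZMod (n i)) →+ M :=
    ((cocycleAlt f).compl₂ ε.symm.toAddMonoidHom).comp ε.symm.toAddMonoidHom
  have torsion (f) (i j : Fin d) : n j • β f (Pi.single i 1) (Pi.single j 1) = 0 := by
    rw [← map_nsmul, ← Pi.single_smul, nsmul_one, ZMod.natCast_self, Pi.single_zero, map_zero]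
  -- a pair `i < j` is encoded as `j` together with `i : Fin j`
  let φ (f : cocycles₂ (Rep.trivial ℤ G M)) : ∀ j : Fin d, Fin j → {m : M // n j • m = 0} :=
    fun j i => ⟨β f (Pi.single (Fin.castLE j.isLt.le i) 1) (Pi.single j 1), torsion f _ _⟩
  have hφ : Function.FactorsThrough (H2π (Rep.trivial ℤ G M)) φ := fun f f' h => by
    refine H2π_eq_of_cocycleAlt_eq ?_
    have hβ : β f = β f' := AddMonoidHom.pi_zmod_ext_of_alternating
      (fun _ => cocycleAlt_self f _) (fun _ => cocycleAlt_self f' _)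
      fun i j hij => congr_arg Subtype.val (congr_fun (congr_fun h j) ⟨i, hij⟩)
    refine AddMonoidHom.ext fun a => AddMonoidHom.ext fun b => ?_
    simpa [β] using congr($hβ (ε a) (ε b))
  calc Nat.card (H2 (Rep.trivial ℤ G M))
      ≤ Nat.card (∀ j : Fin d, Fin j → {m : M // n j • m = 0}) :=
        hφ.card_le_of_surjective ((ModuleCat.epi_iff_surjective _).1 inferInstance)
    _ = _ := by simp [Nat.card_pi]

end groupCohomology

/-- Lemma 2.1: for a finite abelian p-group `G ≅ C_{p^{α₁}} × ... × C_{p^{α_d}}` of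
order `p^n`, minimally generated by `d` elements,
`|M(G)| ≤ p^{(1/2)(d-1)(n - (α₁ - α_d))}` (stated with both sides squared). -/
theorem card_schurMultiplier_abelian_le (p n d : ℕ) (hp : p.Prime) (hd : 0 < d)
    (G : Type) [CommGroup G] (hcard : Nat.card G = p ^ n) (α : Fin d → ℕ) (hmono : Antitone α)
    (hiso : Nonempty (G ≃* ∀ i : Fin d, Multiplicative (ZMod (p ^ α i)))) :
    Nat.card (SchurMultiplier G) ^ 2 ≤
      p ^ ((d - 1) * (n - (α ⟨0, hd⟩ - α ⟨d - 1, by omega⟩))) := by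
  obtain ⟨e⟩ := hiso
  have : ∀ j, NeZero (p ^ α j) := fun j => ⟨pow_ne_zero _ hp.ne_zero⟩
  have hn : ∑ i, α i = n := Nat.pow_right_injective hp.two_le <| by
    simp [← hcard, Nat.card_congr e.toEquiv, Finset.prod_pow_eq_pow_sum]
  have : ∀ j, Finite {m : Additive ℂˣ // p ^ α j • m = 0} := fun j =>
    Nat.finite_of_card_ne_zero (by simp [Complex.card_additive_units_nsmul_eq_zero, hp.ne_zero])
  have hM : Nat.card (SchurMultiplier G) ≤ p ^ ∑ j : Fin d, (j : ℕ) * α j := by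
    calc Nat.card (SchurMultiplier G)
        ≤ ∏ j : Fin d, Nat.card {m : Additive ℂˣ // p ^ α j • m = 0} ^ (j : ℕ) :=
          groupCohomology.card_H2_trivial_le_prod_card_torsion
            (MulEquiv.toAdditiveLeft (e.trans (MulEquiv.piMultiplicative _).symm))
      _ = p ^ ∑ j : Fin d, (j : ℕ) * α j := by
          simp [Complex.card_additive_units_nsmul_eq_zero, ← pow_mul, Finset.prod_pow_eq_pow_sum,
            mul_comm]
  calc Nat.card (SchurMultiplier G) ^ 2
      ≤ (p ^ ∑ j : Fin d, (j : ℕ) * α j) ^ 2 := Nat.pow_le_pow_left hM 2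
    _ = p ^ (2 * ∑ j : Fin d, (j : ℕ) * α j) := by rw [← pow_mul, mul_comm]
    _ ≤ _ := Nat.pow_le_pow_right hp.pos (hn ▸ Fin.two_mul_sum_val_mul_le_of_antitone hd hmono)
end

section
/- Let d, n, k, e, δ be natural numbers with d ≥ δ ≥ 2, k ≥ 1, and suppose there exist integers α₁ ≥ α₂ ≥ ... ≥ α_d ≥ 1 with α₁ + ... + α_d = n - k and e = α₁. Then (1/2)d(n-k-e) + (δ-1)k - (δ-2) ≤ (1/2)(d-1)(n+k-2) + 1. -/
/-! Since `α` is antitone, `n - k = ∑ αᵢ ≤ d e`, i.e. `d (n - k - e) ≤ (d - 1)(n - k)`; and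
`2(δ - 1)k - 2(δ - 2) = 2(δ - 1)(k - 1) + 2 ≤ 2(d - 1)(k - 1) + 2`. Adding the two gives the claim. -/

theorem Antitone.sum_le_card_nsmul_of_isBot {ι M : Type*} [Fintype ι] [Preorder ι]
    [AddCommMonoid M] [PartialOrder M] [IsOrderedAddMonoid M] {f : ι → M} (hf : Antitone f)
    {i : ι} (hi : IsBot i) : ∑ j, f j ≤ Fintype.card ι • f i :=
  Finset.sum_le_card_nsmul _ _ _ fun j _ => hf (hi j)

/-- Arithmetic core of the derivation of Theorem 1.1 from the Ellis–Wiegold bound: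
if `d ≥ δ ≥ 2`, `k ≥ 1`, and there are integers `α₁ ≥ ... ≥ α_d ≥ 1` with sum `n - k`
and `e = α₁`, then `(1/2)d(n-k-e) + (δ-1)k - (δ-2) ≤ (1/2)(d-1)(n+k-2) + 1`
(stated multiplied through by 2). -/
theorem ellis_wiegold_exponent_le (d n k e δ : ℕ) (hδ : 2 ≤ δ) (hdδ : δ ≤ d)
    (hk : 1 ≤ k) (α : Fin d → ℤ) (hmono : Antitone α)
    (hsum : ∑ i, α i = (n : ℤ) - k) (he : (e : ℤ) = α ⟨0, by omega⟩) :
    (d : ℤ) * ((n : ℤ) - k - e) + 2 * ((δ : ℤ) - 1) * k - 2 * ((δ : ℤ) - 2) ≤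
      ((d : ℤ) - 1) * ((n : ℤ) + k - 2) + 2 := by
  have hsum_le : (n : ℤ) - k ≤ d * e := by
    simpa [hsum, he] using hmono.sum_le_card_nsmul_of_isBot (i := ⟨0, by omega⟩)
      fun j => Fin.mk_le_of_le_val (Nat.zero_le _)
  have hδk : ((δ : ℤ) - 1) * ((k : ℤ) - 1) ≤ ((d : ℤ) - 1) * ((k : ℤ) - 1) := by
    gcongr
    omega
  linarith
end
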